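/- In X_6' (k = 6), for the class d = 4[L] − Σ_{i=1}^6 [E_i] (so a = 4, bᵢ = 1 for all i, and d·[E] = 2), the refined count of d-marked floor diagrams of genus 0 and type ((1,1),∅) is N_q^{(1,1),∅}(X_6',4[L]−Σ[E_i],0) = [2]_q⁴ + [4]_q² + 8[3]_q² + 44[2]_q² + 112. -/

import Mathlib

open LaurentPolynomial

open scoped Classical

noncomputable section FloorDiagrams

/-- The quantum integer `[n]_q = q^{−(n−1)/2} + q^{−(n−3)/2} + ⋯ + q^{(n−1)/2}`,
as a Laurent polynomial in the variable `t = q^{1/2}` (here `T m` denotes `t^m`). -/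
def qInt (n : ℕ) : LaurentPolynomial ℚ :=
  ∑ j ∈ Finset.range n, T (2 * (j : ℤ) - ((n : ℤ) - 1))

/-- A finite weighted oriented (multi)graph: `nV` vertices, `nE` edges, each edge `e`
having a source `src e`, a target `tgt e` and a positive integer weight `w e`. -/
structure WOGraph where
  nV : ℕ
  nE : ℕ
  src : Fin nE → Fin nV
  tgt : Fin nE → Fin nV
  w : Fin nE → ℕ
  w_pos : ∀ e, 0 < w e

namespace WOGraph

variable (G : WOGraph)

/-- The edge `e` is adjacent to the vertex `v`. -/
def Adj (e : Fin G.nE) (v : Fin G.nV) : Prop :=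
  G.src e = v ∨ G.tgt e = v

/-- One step of the (unoriented) adjacency relation between vertices. -/
def connStep (u v : Fin G.nV) : Prop :=
  ∃ e, (G.src e = u ∧ G.tgt e = v) ∨ (G.src e = v ∧ G.tgt e = u)

/-- The graph is connected. -/
def Connected : Prop :=
  0 < G.nV ∧ ∀ u v, Relation.ReflTransGen G.connStep u v

/-- One step of the oriented relation between vertices. -/
def dirStep (u v : Fin G.nV) : Prop :=
  ∃ e, G.src e = u ∧ G.tgt e = v

/-- The oriented graph is acyclic: there is no non-trivial oriented cycle. -/
def Acyclic : Prop :=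
  ∀ v, ¬ Relation.TransGen G.dirStep v v

/-- The number of edges adjacent to a vertex (with multiplicity). -/
def degree (v : Fin G.nV) : ℕ :=
  (Finset.univ.filter fun e => G.src e = v).card +
    (Finset.univ.filter fun e => G.tgt e = v).card

/-- A leaf is a vertex adjacent to exactly one edge. -/
def IsLeaf (v : Fin G.nV) : Prop := G.degree v = 1

/-- `Vert^∞(G)`: leaves all of whose adjacent edges are outgoing. -/
def InfVert (v : Fin G.nV) : Prop :=
  G.IsLeaf v ∧ ∀ e, G.Adj e v → G.src e = v

/-- `Edge^∞(G)`: edges adjacent to a vertex of `Vert^∞(G)`. -/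
def InfEdge (e : Fin G.nE) : Prop :=
  ∃ v, G.Adj e v ∧ G.InfVert v

/-- The divergence of a vertex: sum of weights of incoming edges minus sum of weights of
outgoing edges. -/
def div (v : Fin G.nV) : ℤ :=
  (∑ e ∈ Finset.univ.filter (fun e => G.tgt e = v), (G.w e : ℤ)) -
    (∑ e ∈ Finset.univ.filter (fun e => G.src e = v), (G.w e : ℤ))

/-- A sink is a vertex all of whose adjacent edges are oriented toward it. -/
def IsSink (v : Fin G.nV) : Prop :=
  ∀ e, G.Adj e v → G.tgt e = v

/-- One step of the partial order on `Vert ⊔ Edge` induced by the orientation: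
a vertex is below each of its outgoing edges, and each edge is below its target. -/
def veStep : (Fin G.nV ⊕ Fin G.nE) → (Fin G.nV ⊕ Fin G.nE) → Prop
  | Sum.inl u, Sum.inr e => G.src e = u
  | Sum.inr e, Sum.inl v => G.tgt e = v
  | _, _ => False

end WOGraph

/-- `G` is a floor diagram (relative to a conic) of genus `g` and degree `a`. -/
structure IsFloorDiagram (G : WOGraph) (g a : ℕ) : Prop where
  conn : G.Connected
  acyclic : G.Acyclic
  betti : G.nE + 1 = G.nV + g
  div_floor : ∀ v, ¬ G.InfVert v → G.div v = 2 ∨ G.div v = 4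
  div_inf : ∀ v, G.InfVert v → G.div v ≤ -1
  sink_of_two : ∀ v, ¬ G.InfVert v → G.div v = 2 → G.IsSink v
  total_div : (∑ v ∈ Finset.univ.filter (fun v => G.InfVert v), G.div v) = -(2 * (a : ℤ))

/-- The marking domain `A₀ ⊔ A₁ ⊔ ⋯ ⊔ A_k`, where
`A₀ = {1, …, a − 1 + g + l(μ₁) + l(μ₂)}` and `|Aᵢ| = bᵢ`. -/
def MarkDom (k g a : ℕ) (b : Fin k → ℕ) (l1 l2 : ℕ) : Type :=
  Fin (a + g + l1 + l2 - 1) ⊕ (Σ i : Fin k, Fin (b i))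

/-- `m` is a `d`-marking of type `(μ₁, μ₂)` of the floor diagram `G` of genus `g` and
degree `a`, where `d` is encoded by `a = d·[L]` and `bᵢ = d·[Eᵢ]`. -/
structure IsMarking (k g a : ℕ) (b : Fin k → ℕ) (μ₁ μ₂ : List ℕ) (G : WOGraph)
    (m : MarkDom k g a b μ₁.length μ₂.length → Fin G.nV ⊕ Fin G.nE) : Prop where
  inj : Function.Injective m
  /-- `m` is increasing: on `A₀` (with its natural order) it is compatible with the strict
  partial order on `Vert ⊔ Edge` induced by the orientation; the elements of
  `A₁, …, A_k` are incomparable, hence impose no condition. -/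
  incr : ∀ i j : Fin (a + g + μ₁.length + μ₂.length - 1),
    Relation.TransGen G.veStep (m (Sum.inl i)) (m (Sum.inl j)) → i < j
  /-- No floor of degree `1` is in the image of `m`. -/
  no_floor_one : ∀ v, ¬ G.InfVert v → G.div v = 2 → ∀ p, m p ≠ Sum.inl v
  /-- For `v ∈ Vert^∞` with adjacent edge `e`, exactly one of `v`, `e` is in the image. -/
  inf_pair : ∀ v, G.InfVert v → ∀ e, G.Adj e v →
    Xor' (∃ p, m p = Sum.inl v) (∃ p, m p = Sum.inr e)
  /-- `m(A₁ ∪ ⋯ ∪ A_k) ⊆ Vert^∞`. -/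
  exc_vert : ∀ (i : Fin k) (p : Fin (b i)),
    ∃ v, G.InfVert v ∧ m (Sum.inr ⟨i, p⟩) = Sum.inl v
  /-- `m({1, …, l(μ₁)}) = m(A₀) ∩ Vert^∞`. -/
  mu1_vert : ∀ i : Fin (a + g + μ₁.length + μ₂.length - 1),
    (∃ v, G.InfVert v ∧ m (Sum.inl i) = Sum.inl v) ↔ (i : ℕ) < μ₁.length
  /-- Every floor is adjacent to at most one edge adjacent to a vertex of `m(Aᵢ)`. -/
  floor_once : ∀ (i : Fin k) (v : Fin G.nV), ¬ G.InfVert v →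
    ∀ e e' : Fin G.nE, G.Adj e v → G.Adj e' v →
      (∃ (p : Fin (b i)) (u : Fin G.nV), m (Sum.inr ⟨i, p⟩) = Sum.inl u ∧ G.Adj e u) →
      (∃ (p : Fin (b i)) (u : Fin G.nV), m (Sum.inr ⟨i, p⟩) = Sum.inl u ∧ G.Adj e' u) →
      e = e'
  /-- For `i ∈ {1, …, l(μ₁)}`, the edge adjacent to `m(i)` has weight `μ₁^{(i)}`. -/
  mu1_weight : ∀ (i : Fin (a + g + μ₁.length + μ₂.length - 1)) (h : (i : ℕ) < μ₁.length)
    (v : Fin G.nV) (e : Fin G.nE),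
      m (Sum.inl i) = Sum.inl v → G.Adj e v → G.w e = μ₁.get ⟨(i : ℕ), h⟩
  /-- Exactly `l(μ₂)` edges of `Edge^∞` are in the image of `m|_{A₀}`, and their weights
  are the entries of `μ₂`. -/
  mu2_edges :
    ((Finset.univ.filter fun e : Fin G.nE =>
        G.InfEdge e ∧ ∃ i : Fin (a + g + μ₁.length + μ₂.length - 1),
          m (Sum.inl i) = Sum.inr e).val.map G.w) = (μ₂ : Multiset ℕ)

/-- A `d`-marked floor diagram of genus `g` and type `(μ₁, μ₂)`, where the class `d` is
encoded by `a = d·[L]` and `bᵢ = d·[Eᵢ]`. -/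
structure MarkedFD (k g a : ℕ) (b : Fin k → ℕ) (μ₁ μ₂ : List ℕ) where
  G : WOGraph
  m : MarkDom k g a b μ₁.length μ₂.length → Fin G.nV ⊕ Fin G.nE
  fd : IsFloorDiagram G g a
  marking : IsMarking k g a b μ₁ μ₂ G m

namespace MarkedFD

variable {k g a : ℕ} {b : Fin k → ℕ} {μ₁ μ₂ : List ℕ}

/-- Equivalence of marked floor diagrams: an isomorphism of weighted oriented graphs
together with a bijection of the marking sets which is the identity on `A₀` and maps
each `Aᵢ` (`i ≥ 1`) bijectively onto itself, compatible with the markings. -/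
def Equivalent (X Y : MarkedFD k g a b μ₁ μ₂) : Prop :=
  ∃ (φV : Fin X.G.nV ≃ Fin Y.G.nV) (φE : Fin X.G.nE ≃ Fin Y.G.nE)
    (ψ : MarkDom k g a b μ₁.length μ₂.length ≃ MarkDom k g a b μ₁.length μ₂.length),
      (∀ e, Y.G.src (φE e) = φV (X.G.src e)) ∧
      (∀ e, Y.G.tgt (φE e) = φV (X.G.tgt e)) ∧
      (∀ e, Y.G.w (φE e) = X.G.w e) ∧
      (∀ i, ψ (Sum.inl i) = Sum.inl i) ∧
      (∀ (i : Fin k) (p : Fin (b i)), ∃ p' : Fin (b i),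
        ψ (Sum.inr ⟨i, p⟩) = Sum.inr ⟨i, p'⟩) ∧
      (∀ p, Y.m (ψ p) = Sum.map φV φE (X.m p))

variable (X : MarkedFD k g a b μ₁ μ₂)

/-- `Edge^{μ₁}`: edges adjacent to `m({1, …, l(μ₁)})`. -/
def EdgeMu1 : Finset (Fin X.G.nE) :=
  Finset.univ.filter fun e =>
    ∃ i : Fin (a + g + μ₁.length + μ₂.length - 1), (i : ℕ) < μ₁.length ∧
      ∃ v, X.m (Sum.inl i) = Sum.inl v ∧ X.G.Adj e v

/-- `Edge^{μ₂}`: the `l(μ₂)` edges of `Edge^∞` in the image of `m|_{A₀}`. -/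
def EdgeMu2 : Finset (Fin X.G.nE) :=
  Finset.univ.filter fun e =>
    X.G.InfEdge e ∧ ∃ i : Fin (a + g + μ₁.length + μ₂.length - 1),
      X.m (Sum.inl i) = Sum.inr e

/-- `Edge°`: edges not in `Edge^∞`. -/
def EdgeO : Finset (Fin X.G.nE) :=
  Finset.univ.filter fun e => ¬ X.G.InfEdge e

/-- The q-refined (Block–Göttsche) multiplicity of a marked floor diagram:
`∏_{e∈Edge^{μ₂}} [w(e)]_q/w(e) · ∏_{e∈Edge^{μ₁}} [w(e)]_q/w(e) · ∏_{e∈Edge^{μ₂}} w(e)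
 · ∏_{e∈Edge°} [w(e)]_q²`. -/
def multq : LaurentPolynomial ℚ :=
  (∏ e ∈ X.EdgeMu2, (C ((X.G.w e : ℚ)⁻¹) * qInt (X.G.w e))) *
    (∏ e ∈ X.EdgeMu1, (C ((X.G.w e : ℚ)⁻¹) * qInt (X.G.w e))) *
    (∏ e ∈ X.EdgeMu2, C ((X.G.w e : ℚ))) *
    (∏ e ∈ X.EdgeO, (qInt (X.G.w e)) ^ 2)

/-- The complex multiplicity of a marked floor diagram:
`∏_i μ₂^{(i)} · ∏_{e∈Edge°} w(e)²`. -/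
def multC : ℚ :=
  (μ₂.map fun x => (x : ℚ)).prod * ∏ e ∈ X.EdgeO, (X.G.w e : ℚ) ^ 2

end MarkedFD

/-- `N` is the refined count `N_q^{μ₁,μ₂}(X_k', d, g)` of `d`-marked floor diagrams of
genus `g` and type `(μ₁, μ₂)`: the sum of the q-refined multiplicities over a (finite) set
of representatives of the equivalence classes of marked floor diagrams. -/
def IsRefinedCount (k g a : ℕ) (b : Fin k → ℕ) (μ₁ μ₂ : List ℕ)
    (N : LaurentPolynomial ℚ) : Prop :=
  ∃ (ι : Type) (hι : Fintype ι) (rep : ι → MarkedFD k g a b μ₁ μ₂),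
    (∀ X : MarkedFD k g a b μ₁ μ₂, ∃! i : ι, X.Equivalent (rep i)) ∧
    N = ∑ i ∈ @Finset.univ ι hι, (rep i).multq

/-- `N` is the complex count `N_ℂ^{μ₁,μ₂}(X_k', d, g)` of `d`-marked floor diagrams of
genus `g` and type `(μ₁, μ₂)`. -/
def IsComplexCount (k g a : ℕ) (b : Fin k → ℕ) (μ₁ μ₂ : List ℕ) (N : ℚ) : Prop :=
  ∃ (ι : Type) (hι : Fintype ι) (rep : ι → MarkedFD k g a b μ₁ μ₂),
    (∀ X : MarkedFD k g a b μ₁ μ₂, ∃! i : ι, X.Equivalent (rep i)) ∧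
    N = ∑ i ∈ @Finset.univ ι hι, (rep i).multC

end FloorDiagrams

/-!
In a marked floor diagram of this type the first two marks of `A₀` and the marks of
`A₁, …, A₆` sit on unbounded ends. The ends have total divergence `-8`, so these eight ends are
all of them and every end has weight `1`. The floors then have total divergence `8`, and since a
floor of degree `1` is a sink, there are two possible shapes: two floors of degree `2` joined by
one edge, or one floor of degree `2` with one edge to each of two floors of degree `1`. Counting
shows that the last three marks of `A₀` land exactly on the floors of degree `2` and the edges
between floors, and the increasing condition fixes where each of them goes. A marked floor diagram
is therefore determined, up to equivalence, by the sets of ends attached to the upper floors, and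
the divergence conditions force the weights: the first shape contributes
`[4]² + 8[3]² + 28[2]² + 56` and the second `[2]⁴ + 16[2]² + 56`.
-/

open Finset

theorem Relation.TransGen.rank_lt {α : Type*} {r : α → α → Prop} (ρ : α → ℕ)
    (hρ : ∀ x y, r x y → ρ x < ρ y) {x y : α} (h : Relation.TransGen r x y) : ρ x < ρ y := by
  simpa only [Relation.transGen_eq_self] using h.lift ρ hρ

@[simp] theorem Fin.castAdd_ne_natAdd {m n : ℕ} (i : Fin m) (j : Fin n) :
    Fin.castAdd n i ≠ Fin.natAdd m j :=
  Fin.ne_of_lt (by simp only [Fin.lt_def, Fin.val_castAdd, Fin.val_natAdd]; omega)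

@[simp] theorem Fin.natAdd_ne_castAdd {m n : ℕ} (i : Fin m) (j : Fin n) :
    Fin.natAdd m j ≠ Fin.castAdd n i :=
  (Fin.castAdd_ne_natAdd i j).symm

theorem Matrix.injective_vecCons_two {α : Type*} {a b : α} (hab : a ≠ b) :
    Function.Injective ![a, b] :=
  Fin.cons_injective_iff.2 ⟨by simp [hab], Function.injective_of_subsingleton _⟩

theorem Matrix.injective_vecCons_three {α : Type*} {a b c : α} (hab : a ≠ b) (hac : a ≠ c)
    (hbc : b ≠ c) : Function.Injective ![a, b, c] :=
  Fin.cons_injective_iff.2 ⟨by simp [hab, hac], Matrix.injective_vecCons_two hbc⟩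

theorem Finset.pairwise_ne_of_card_eq_three {α : Type*} [DecidableEq α] {a b c : α}
    (h : #({a, b, c} : Finset α) = 3) : a ≠ b ∧ a ≠ c ∧ b ≠ c := by
  refine ⟨?_, ?_, ?_⟩ <;> rintro rfl <;> simp at h <;>
    exact absurd h (card_le_two.trans_lt (by norm_num)).ne

theorem qInt_one : qInt 1 = 1 := by
  simp [qInt]

namespace WOGraph

variable {G : WOGraph}

theorem sum_div_eq_zero (G : WOGraph) : ∑ v, G.div v = 0 := by
  simp only [div, sum_sub_distrib, sum_fiberwise, sub_self]

theorem Acyclic.src_ne_tgt (hG : G.Acyclic) (e : Fin G.nE) : G.src e ≠ G.tgt e :=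
  fun h => hG _ (.single ⟨e, h, rfl⟩)

theorem acyclic_of_rank (ρ : Fin G.nV → ℕ) (hρ : ∀ e, ρ (G.src e) < ρ (G.tgt e)) :
    G.Acyclic := fun _ hv =>
  (hv.rank_lt ρ fun _ _ ⟨e, hs, ht⟩ => hs ▸ ht ▸ hρ e).false

instance (G : WOGraph) : Std.Symm G.connStep :=
  ⟨fun _ _ ⟨e, he⟩ => ⟨e, he.symm⟩⟩

theorem connected_of_forall_reflTransGen (r : Fin G.nV)
    (h : ∀ v, Relation.ReflTransGen G.connStep v r) : G.Connected :=
  ⟨r.pos, fun u v => (h u).trans (Std.Symm.symm _ _ (h v))⟩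

theorem Connected.forall_of_iff (hG : G.Connected) {P : Fin G.nV → Prop}
    (hP : ∀ e, P (G.src e) ↔ P (G.tgt e)) {u : Fin G.nV} (hu : P u) (v : Fin G.nV) : P v := by
  induction hG.2 u v with
  | refl => exact hu
  | tail _ h ih =>
    obtain ⟨e, ⟨hs, ht⟩ | ⟨hs, ht⟩⟩ := h
    · exact ht ▸ (hP e).1 (hs ▸ ih)
    · exact hs ▸ (hP e).2 (ht ▸ ih)

theorem infVert_iff {v : Fin G.nV} :
    G.InfVert v ↔ ∃ e, univ.filter (G.src · = v) = {e} ∧ ∀ e', G.tgt e' ≠ v := by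
  constructor
  · rintro ⟨hleaf, hout⟩
    have htgt : ∀ e', G.tgt e' ≠ v := by
      intro e' he'
      have h1 : e' ∈ univ.filter (G.src · = v) := by simp [hout e' (Or.inr he')]
      have h2 : e' ∈ univ.filter (G.tgt · = v) := by simp [he']
      have := card_pos.2 ⟨_, h1⟩
      have := card_pos.2 ⟨_, h2⟩
      unfold IsLeaf degree at hleaf
      omega
    have h0 : univ.filter (G.tgt · = v) = ∅ := filter_eq_empty_iff.2 fun e _ => htgt e
    unfold IsLeaf degree at hleaf
    rw [h0, card_empty, add_zero, card_eq_one] at hleaf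
    exact hleaf.imp fun _ he => ⟨he, htgt⟩
  · rintro ⟨e, he, htgt⟩
    have h0 : univ.filter (G.tgt · = v) = ∅ := filter_eq_empty_iff.2 fun e _ => htgt e
    exact ⟨by simp [IsLeaf, degree, he, h0], fun e' he' => he'.resolve_right (htgt e')⟩

theorem InfVert.tgt_ne {v : Fin G.nV} (hv : G.InfVert v) (e : Fin G.nE) : G.tgt e ≠ v :=
  (infVert_iff.1 hv).elim fun _ h => h.2 e

theorem InfVert.exists_src_eq_iff {v : Fin G.nV} (hv : G.InfVert v) :
    ∃ e, ∀ e', G.src e' = v ↔ e' = e := by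
  obtain ⟨e, he, -⟩ := infVert_iff.1 hv
  exact ⟨e, fun e' => by simpa using Finset.ext_iff.1 he e'⟩

theorem InfVert.div_eq {v : Fin G.nV} (hv : G.InfVert v) {e : Fin G.nE} (he : G.src e = v) :
    G.div v = -G.w e := by
  obtain ⟨e', he', htgt⟩ := infVert_iff.1 hv
  obtain rfl : e = e' := by simpa [he] using Finset.ext_iff.1 he' e
  have h0 : univ.filter (G.tgt · = v) = ∅ := filter_eq_empty_iff.2 fun e _ => htgt e
  simp [div, he', h0]

theorem div_map {H : WOGraph} {gV : Fin H.nV → Fin G.nV} {gE : Fin H.nE → Fin G.nE}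
    (hV : Function.Injective gV) (hE : Function.Bijective gE)
    (hsrc : ∀ e, G.src (gE e) = gV (H.src e)) (htgt : ∀ e, G.tgt (gE e) = gV (H.tgt e))
    (hw : ∀ e, G.w (gE e) = H.w e) (v : Fin H.nV) : G.div (gV v) = H.div v := by
  simp only [div, sum_filter]
  rw [← hE.sum_comp, ← hE.sum_comp]
  simp only [hsrc, htgt, hw, hV.eq_iff]

end WOGraph

namespace IsFloorDiagram

open WOGraph

variable {G : WOGraph} {g a : ℕ}

theorem div_src_eq_four (hG : IsFloorDiagram G g a) {e : Fin G.nE}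
    (he : ¬G.InfVert (G.src e)) : G.div (G.src e) = 4 :=
  (hG.div_floor _ he).resolve_left fun h2 =>
    hG.acyclic.src_ne_tgt e (hG.sink_of_two _ he h2 e (Or.inl rfl)).symm

theorem card_infVert_le (hG : IsFloorDiagram G g a) : #{v | G.InfVert v} ≤ 2 * a := by
  have hle : ∑ v ∈ univ.filter (G.InfVert ·), G.div v ≤ ∑ v ∈ univ.filter (G.InfVert ·), (-1) :=
    sum_le_sum fun v hv => hG.div_inf v (mem_filter.1 hv).2
  rw [sum_const, hG.total_div] at hle
  simp at hle
  omega

theorem div_eq_neg_one (hG : IsFloorDiagram G g a) (hcard : #{v | G.InfVert v} = 2 * a)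
    {v : Fin G.nV} (hv : G.InfVert v) : G.div v = -1 := by
  have hsum : ∑ u ∈ univ.filter (G.InfVert ·), (G.div u + 1) = 0 := by
    rw [sum_add_distrib, hG.total_div, sum_const, hcard]
    simp
  have := (sum_eq_zero_iff_of_nonpos fun u hu => by
    linarith [hG.div_inf u (mem_filter.1 hu).2]).1 hsum v (by simpa using hv)
  omega

theorem sum_div_floor (hG : IsFloorDiagram G g a) :
    ∑ v ∈ univ.filter (¬G.InfVert ·), G.div v = 2 * a := by
  have := sum_filter_add_sum_filter_not univ (G.InfVert ·) G.div
  rw [G.sum_div_eq_zero, hG.total_div] at this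
  linarith

/-- Otherwise the floor `v`, a sink, would form a connected component together with the
unbounded ends attached to it. -/
theorem exists_floorEdge_tgt (hG : IsFloorDiagram G g a) {v w : Fin G.nV}
    (hv : ¬G.InfVert v) (hv2 : G.div v = 2) (hw : ¬G.InfVert w) (hwv : w ≠ v) :
    ∃ e, G.tgt e = v ∧ ¬G.InfVert (G.src e) := by
  by_contra! h
  let P : Fin G.nV → Prop := fun x => x = v ∨ (G.InfVert x ∧ ∃ e, G.src e = x ∧ G.tgt e = v)
  have hP : ∀ e, P (G.src e) ↔ P (G.tgt e) := by
    intro e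
    constructor
    · rintro (hs | ⟨hinf, e', hs', ht'⟩)
      · exact Or.inl (hG.sink_of_two v hv hv2 e (Or.inl hs))
      · obtain ⟨e₀, he₀⟩ := hinf.exists_src_eq_iff
        exact Or.inl (((he₀ e).1 rfl).trans ((he₀ e').1 hs').symm ▸ ht')
    · rintro (ht | ⟨hinf, -⟩)
      · exact Or.inr ⟨h e ht, e, rfl, ht⟩
      · exact (hinf.tgt_ne e rfl).elim
  rcases hG.conn.forall_of_iff hP (Or.inl rfl) w with h' | ⟨h', -⟩
  · exact hwv h'
  · exact hw h'

end IsFloorDiagram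

theorem IsMarking.not_infEdge {k g a : ℕ} {b : Fin k → ℕ} {μ₁ : List ℕ} {G : WOGraph}
    {m : MarkDom k g a b μ₁.length 0 → Fin G.nV ⊕ Fin G.nE} (hm : IsMarking k g a b μ₁ [] G m)
    {i : Fin (a + g + μ₁.length + 0 - 1)} {e : Fin G.nE} (h : m (Sum.inl i) = Sum.inr e) :
    ¬G.InfEdge e := by
  have h0 := hm.mu2_edges
  rw [Multiset.coe_nil, Multiset.map_eq_zero, Finset.val_eq_zero] at h0
  exact fun he => Finset.notMem_empty e (h0 ▸ by simpa using ⟨he, i, h⟩)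

namespace MarkedFD

variable {k g a : ℕ} {b : Fin k → ℕ} {μ₁ μ₂ : List ℕ}

theorem equivalent_of_bijective {X Y : MarkedFD k g a b μ₁ μ₂} {gV : Fin Y.G.nV → Fin X.G.nV}
    {gE : Fin Y.G.nE → Fin X.G.nE} (hV : Function.Bijective gV) (hE : Function.Bijective gE)
    (hsrc : ∀ e, X.G.src (gE e) = gV (Y.G.src e)) (htgt : ∀ e, X.G.tgt (gE e) = gV (Y.G.tgt e))
    (hw : ∀ e, X.G.w (gE e) = Y.G.w e) (hm : ∀ p, X.m p = Sum.map gV gE (Y.m p)) :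
    X.Equivalent Y := by
  set φV := (Equiv.ofBijective gV hV).symm
  set φE := (Equiv.ofBijective gE hE).symm
  have hφV : ∀ v, φV (gV v) = v := (Equiv.ofBijective gV hV).symm_apply_apply
  have hφE : ∀ e, gE (φE e) = e := (Equiv.ofBijective gE hE).apply_symm_apply
  refine ⟨φV, φE, Equiv.refl _, fun e => ?_, fun e => ?_, fun e => ?_, fun _ => rfl,
    fun _ p => ⟨p, rfl⟩, fun p => ?_⟩
  · rw [← hφV (Y.G.src _), ← hsrc, hφE]
  · rw [← hφV (Y.G.tgt _), ← htgt, hφE]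
  · rw [← hw, hφE]
  · rw [Equiv.refl_apply, hm, Sum.map_map]
    cases Y.m p <;> simp [hφV, φE]

def IsIso (X Y : MarkedFD k g a b μ₁ μ₂) (φV : Fin X.G.nV ≃ Fin Y.G.nV)
    (φE : Fin X.G.nE ≃ Fin Y.G.nE) : Prop :=
  (∀ e, Y.G.src (φE e) = φV (X.G.src e)) ∧ (∀ e, Y.G.tgt (φE e) = φV (X.G.tgt e)) ∧
    (∀ e, Y.G.w (φE e) = X.G.w e) ∧ ∀ p, Y.m p = Sum.map φV φE (X.m p)

theorem IsIso.symm {X Y : MarkedFD k g a b μ₁ μ₂} {φV : Fin X.G.nV ≃ Fin Y.G.nV}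
    {φE : Fin X.G.nE ≃ Fin Y.G.nE} (h : IsIso X Y φV φE) : IsIso Y X φV.symm φE.symm := by
  obtain ⟨hs, ht, hw, hm⟩ := h
  refine ⟨fun e => ?_, fun e => ?_, fun e => ?_, fun p => ?_⟩
  · rw [φV.eq_symm_apply, ← hs, φE.apply_symm_apply]
  · rw [φV.eq_symm_apply, ← ht, φE.apply_symm_apply]
  · rw [← hw, φE.apply_symm_apply]
  · rw [hm, Sum.map_map]
    cases X.m p <;> simp

theorem IsIso.trans {X Y Z : MarkedFD k g a b μ₁ μ₂} {φV : Fin X.G.nV ≃ Fin Y.G.nV}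
    {φE : Fin X.G.nE ≃ Fin Y.G.nE} {φV' : Fin Y.G.nV ≃ Fin Z.G.nV}
    {φE' : Fin Y.G.nE ≃ Fin Z.G.nE} (h : IsIso X Y φV φE) (h' : IsIso Y Z φV' φE') :
    IsIso X Z (φV.trans φV') (φE.trans φE') := by
  obtain ⟨hs, ht, hw, hm⟩ := h
  obtain ⟨hs', ht', hw', hm'⟩ := h'
  refine ⟨fun e => ?_, fun e => ?_, fun e => ?_, fun p => ?_⟩
  · simp [hs, hs']
  · simp [ht, ht']
  · simp [hw, hw']
  · rw [hm', hm, Sum.map_map]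
    rfl

/-- Since every `Aᵢ` has at most one element, the bijection of marking sets in an equivalence
is the identity. -/
theorem equivalent_iff_exists_isIso (hb : ∀ i, b i ≤ 1) {X Y : MarkedFD k g a b μ₁ μ₂} :
    X.Equivalent Y ↔ ∃ φV φE, IsIso X Y φV φE := by
  constructor
  · rintro ⟨φV, φE, ψ, hs, ht, hw, hψl, hψr, hm⟩
    have hψ : ∀ p, ψ p = p := by
      rintro (i | ⟨i, p⟩)
      · exact hψl i
      · obtain ⟨p', hp'⟩ := hψr i p
        rw [hp', Fin.subsingleton_iff_le_one.2 (hb i) |>.elim p' p]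
    exact ⟨φV, φE, hs, ht, hw, fun p => by simpa only [hψ] using hm p⟩
  · rintro ⟨φV, φE, hs, ht, hw, hm⟩
    exact ⟨φV, φE, Equiv.refl _, hs, ht, hw, fun _ => rfl, fun _ p => ⟨p, rfl⟩, hm⟩

theorem multq_eq_prod_edgeO {μ₁ : List ℕ} (X : MarkedFD k g a b μ₁ []) (hμ : ∀ x ∈ μ₁, x = 1) :
    X.multq = ∏ e ∈ X.EdgeO, qInt (X.G.w e) ^ 2 := by
  have h2 : X.EdgeMu2 = ∅ :=
    filter_eq_empty_iff.2 fun _ _ ⟨he, _, hi⟩ => X.marking.not_infEdge hi he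
  have h1 : ∀ e ∈ X.EdgeMu1, X.G.w e = 1 := by
    intro e he
    obtain ⟨i, hi, v, hv, hadj⟩ := (mem_filter.1 he).2
    exact (X.marking.mu1_weight i hi v e hv hadj).trans (hμ _ (List.get_mem _ _))
  rw [MarkedFD.multq, h2, prod_empty, prod_empty, prod_eq_one fun e he => by
    rw [h1 e he, qInt_one]; simp]
  simp

end MarkedFD

/-- The floor diagram with floors `0, …, n` followed by `N` unbounded ends: an edge of weight `w j`
goes from floor `0` to floor `j + 1`, and the end `ℓ` is attached by an edge of weight `1` to the
floor `t ℓ`. Edges between floors come first, then the edges of the ends. -/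
abbrev starGraph (n N : ℕ) (t : Fin N → Fin (n + 1)) (w : Fin n → ℕ) (hw : ∀ j, 0 < w j) :
    WOGraph where
  nV := n + 1 + N
  nE := n + N
  src := Fin.append (fun _ => Fin.castAdd N 0) (Fin.natAdd (n + 1))
  tgt := Fin.append (fun j => Fin.castAdd N j.succ) (fun ℓ => Fin.castAdd N (t ℓ))
  w := Fin.append w fun _ => 1
  w_pos := Fin.addCases (by simpa using hw) (by simp)

namespace starGraph

open WOGraph

variable {n N : ℕ} {t : Fin N → Fin (n + 1)} {w : Fin n → ℕ} {hw : ∀ j, 0 < w j}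

theorem div_castAdd (f : Fin (n + 1)) :
    (starGraph n N t w hw).div (Fin.castAdd N f) =
      (∑ j, if j.succ = f then (w j : ℤ) else 0) + #{ℓ | t ℓ = f} -
        if f = 0 then ∑ j, (w j : ℤ) else 0 := by
  simp [div, sum_filter, Fin.sum_univ_add, eq_comm (a := f), Finset.sum_boole, sum_ite_irrel]

theorem div_succ (j : Fin n) :
    (starGraph n N t w hw).div (Fin.castAdd N j.succ) = w j + #{ℓ | t ℓ = j.succ} := by
  simp [div_castAdd, Fin.succ_ne_zero]

theorem div_zero :
    (starGraph n N t w hw).div (Fin.castAdd N 0) = #{ℓ | t ℓ = 0} - ∑ j, (w j : ℤ) := by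
  simp [div_castAdd, Fin.succ_ne_zero]

theorem src_eq_natAdd_iff {e : Fin (n + N)} {ℓ : Fin N} :
    (starGraph n N t w hw).src e = Fin.natAdd (n + 1) ℓ ↔ e = Fin.natAdd n ℓ := by
  induction e using Fin.addCases <;> simp

theorem src_ne_succ (e : Fin (n + N)) (j : Fin n) :
    (starGraph n N t w hw).src e ≠ Fin.castAdd N j.succ := by
  induction e using Fin.addCases <;> simp [eq_comm (a := (0 : Fin (n + 1))), Fin.succ_ne_zero]

theorem tgt_ne_natAdd (e : Fin (n + N)) (ℓ : Fin N) :
    (starGraph n N t w hw).tgt e ≠ Fin.natAdd (n + 1) ℓ := by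
  induction e using Fin.addCases <;> simp

theorem infVert_natAdd (ℓ : Fin N) : (starGraph n N t w hw).InfVert (Fin.natAdd (n + 1) ℓ) :=
  infVert_iff.2 ⟨Fin.natAdd n ℓ, by ext e; induction e using Fin.addCases <;> simp,
    (tgt_ne_natAdd · ℓ)⟩

theorem not_infVert_castAdd (h0 : ∃ ℓ, t ℓ = 0) (f : Fin (n + 1)) :
    ¬(starGraph n N t w hw).InfVert (Fin.castAdd N f) := by
  induction f using Fin.cases with
  | zero =>
    obtain ⟨ℓ, hℓ⟩ := h0
    exact fun h => h.tgt_ne (Fin.natAdd n ℓ) (by simp [hℓ])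
  | succ j => exact fun h => h.tgt_ne (Fin.castAdd N j) (by simp)

theorem infVert_iff_eq_natAdd (h0 : ∃ ℓ, t ℓ = 0) {v : Fin (n + 1 + N)} :
    (starGraph n N t w hw).InfVert v ↔ ∃ ℓ, v = Fin.natAdd (n + 1) ℓ := by
  induction v using Fin.addCases with
  | left f => simp [not_infVert_castAdd h0]
  | right ℓ => simp [infVert_natAdd]

theorem div_natAdd (ℓ : Fin N) : (starGraph n N t w hw).div (Fin.natAdd (n + 1) ℓ) = -1 := by
  simp [(infVert_natAdd ℓ).div_eq (e := Fin.natAdd n ℓ) (by simp)]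

theorem connected : (starGraph n N t w hw).Connected := by
  have hfloor (f : Fin (n + 1)) : Relation.ReflTransGen (starGraph n N t w hw).connStep
      (Fin.castAdd N f) (Fin.castAdd N 0) := by
    induction f using Fin.cases with
    | zero => exact .refl
    | succ j => exact .single ⟨Fin.castAdd N j, Or.inr (by simp)⟩
  refine connected_of_forall_reflTransGen (Fin.castAdd N 0) fun v => ?_
  induction v using Fin.addCases with
  | left f => exact hfloor f
  | right ℓ => exact .head ⟨Fin.natAdd n ℓ, Or.inl (by simp)⟩ (hfloor (t ℓ))

theorem acyclic : (starGraph n N t w hw).Acyclic := by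
  refine acyclic_of_rank (Fin.append (fun f => if f = 0 then 1 else 2) fun _ => 0) fun e => ?_
  induction e using Fin.addCases with
  | left j => simp [Fin.succ_ne_zero]
  | right ℓ => simp only [Fin.append_left, Fin.append_right]; split <;> omega

variable {c : ℕ}

theorem card_filter_eq_zero (hwc : ∀ j, w j + #{ℓ | t ℓ = j.succ} = c) (hN : N = n * c + 4) :
    (#{ℓ | t ℓ = 0} : ℤ) = 4 + ∑ j, (w j : ℤ) := by
  have hcard : #{ℓ | t ℓ = 0} + ∑ j : Fin n, #{ℓ | t ℓ = j.succ} = N := by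
    rw [← Fin.sum_univ_succ (f := fun f => #{ℓ | t ℓ = f}),
      ← card_eq_sum_card_fiberwise (fun _ _ => mem_univ _), card_univ, Fintype.card_fin]
  have hsum : ∑ j, w j + ∑ j : Fin n, #{ℓ | t ℓ = j.succ} = n * c := by
    simp [← sum_add_distrib, hwc]
  have hcast : ((∑ j, w j : ℕ) : ℤ) = ∑ j, (w j : ℤ) := by push_cast; rfl
  omega

theorem exists_eq_zero (hwc : ∀ j, w j + #{ℓ | t ℓ = j.succ} = c) (hN : N = n * c + 4) :
    ∃ ℓ, t ℓ = 0 := by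
  have h := card_filter_eq_zero hwc hN
  have : (0 : ℤ) ≤ ∑ j, (w j : ℤ) := sum_nonneg fun _ _ => by positivity
  obtain ⟨ℓ, hℓ⟩ := card_pos.1 (by omega : 0 < #{ℓ | t ℓ = 0})
  exact ⟨ℓ, (mem_filter.1 hℓ).2⟩

theorem div_zero_eq_four (hwc : ∀ j, w j + #{ℓ | t ℓ = j.succ} = c) (hN : N = n * c + 4) :
    (starGraph n N t w hw).div (Fin.castAdd N 0) = 4 := by
  rw [div_zero, card_filter_eq_zero hwc hN]
  ring

theorem div_castAdd_eq (hwc : ∀ j, w j + #{ℓ | t ℓ = j.succ} = c) (hN : N = n * c + 4)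
    (f : Fin (n + 1)) :
    (starGraph n N t w hw).div (Fin.castAdd N f) = if f = 0 then 4 else (c : ℤ) := by
  induction f using Fin.cases with
  | zero => simp [div_zero_eq_four hwc hN]
  | succ j => simp [div_succ, Fin.succ_ne_zero, ← hwc j]

theorem eq_castAdd_of_not_infVert {v : Fin (n + 1 + N)}
    (hv : ¬(starGraph n N t w hw).InfVert v) : ∃ f, v = Fin.castAdd N f := by
  induction v using Fin.addCases with
  | left f => exact ⟨f, rfl⟩
  | right ℓ => exact (hv (infVert_natAdd ℓ)).elim

theorem isFloorDiagram {a : ℕ} (hc : c = 2 ∨ c = 4)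
    (hwc : ∀ j, w j + #{ℓ | t ℓ = j.succ} = c) (hN : N = n * c + 4) (ha : N = 2 * a) :
    IsFloorDiagram (starGraph n N t w hw) 0 a := by
  have hdiv := div_castAdd_eq (hw := hw) hwc hN
  have h0 := exists_eq_zero hwc hN
  refine ⟨connected, acyclic, by simp only [add_zero]; omega, fun v hv => ?_, fun v hv => ?_,
    fun v hv h2 e he => ?_, ?_⟩
  · obtain ⟨f, rfl⟩ := eq_castAdd_of_not_infVert hv
    rw [hdiv]
    split <;> omega
  · obtain ⟨ℓ, rfl⟩ := (infVert_iff_eq_natAdd h0).1 hv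
    rw [div_natAdd]
  · obtain ⟨f, rfl⟩ := eq_castAdd_of_not_infVert hv
    induction f using Fin.cases with
    | zero => simp [hdiv] at h2
    | succ j => exact he.resolve_left (src_ne_succ e j)
  · rw [sum_filter, Fin.sum_univ_add]
    simp [not_infVert_castAdd h0, infVert_natAdd, div_natAdd]
    omega

theorem adj_natAdd_iff {e : Fin (n + N)} {ℓ : Fin N} :
    (starGraph n N t w hw).Adj e (Fin.natAdd (n + 1) ℓ) ↔ e = Fin.natAdd n ℓ := by
  induction e using Fin.addCases <;> simp [Adj]

theorem infEdge_iff (h0 : ∃ ℓ, t ℓ = 0) {e : Fin (n + N)} :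
    (starGraph n N t w hw).InfEdge e ↔ ∃ ℓ, e = Fin.natAdd n ℓ := by
  simp only [InfEdge, infVert_iff_eq_natAdd h0]
  constructor
  · rintro ⟨_, hadj, ℓ, rfl⟩
    exact ⟨ℓ, adj_natAdd_iff.1 hadj⟩
  · rintro ⟨ℓ, rfl⟩
    exact ⟨_, adj_natAdd_iff.2 rfl, ℓ, rfl⟩

theorem prod_not_infEdge {M : Type*} [CommMonoid M] (h0 : ∃ ℓ, t ℓ = 0)
    (F : Fin (n + N) → M) :
    ∏ e ∈ univ.filter (¬(starGraph n N t w hw).InfEdge ·), F e = ∏ j, F (Fin.castAdd N j) := by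
  rw [prod_filter, Fin.prod_univ_add]
  simp [infEdge_iff h0]

def rank (n N : ℕ) : Fin (n + 1 + N) ⊕ Fin (n + N) → ℕ :=
  Sum.elim (Fin.append (fun f => if f = 0 then 2 else 4) fun _ => 0)
    (Fin.append (fun _ => 3) fun _ => 1)

theorem rank_lt_of_veStep {x y : Fin (n + 1 + N) ⊕ Fin (n + N)}
    (h : (starGraph n N t w hw).veStep x y) : rank n N x < rank n N y := by
  rcases x with u | e <;> rcases y with v | e' <;> simp only [veStep] at h
  · subst h
    induction e' using Fin.addCases <;> simp [rank]
  · subst h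
    induction e using Fin.addCases with
    | left j => simp [rank, Fin.succ_ne_zero]
    | right ℓ =>
      simp only [rank, Sum.elim_inl, Sum.elim_inr, Fin.append_left, Fin.append_right]
      split <;> omega

end starGraph

/-- The maps `Fin.append fl lv` on vertices and `Fin.append fe le` on edges identify
`starGraph n N t (G.w ∘ fe) _` with `G`. -/
structure IsStarPresentation (G : WOGraph) {n N : ℕ} (t : Fin N → Fin (n + 1))
    (fl : Fin (n + 1) → Fin G.nV) (lv : Fin N → Fin G.nV) (fe : Fin n → Fin G.nE)
    (le : Fin N → Fin G.nE) : Prop where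
  bijective_vert : Function.Bijective (Fin.append fl lv)
  bijective_edge : Function.Bijective (Fin.append fe le)
  src_fe : ∀ j, G.src (fe j) = fl 0
  tgt_fe : ∀ j, G.tgt (fe j) = fl j.succ
  src_le : ∀ ℓ, G.src (le ℓ) = lv ℓ
  tgt_le : ∀ ℓ, G.tgt (le ℓ) = fl (t ℓ)
  w_le : ∀ ℓ, G.w (le ℓ) = 1

namespace IsStarPresentation

variable {G : WOGraph} {n N : ℕ} {t : Fin N → Fin (n + 1)} {fl : Fin (n + 1) → Fin G.nV}
  {lv : Fin N → Fin G.nV} {fe : Fin n → Fin G.nE} {le : Fin N → Fin G.nE}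
  {w : Fin n → ℕ} {hw : ∀ j, 0 < w j}

theorem src_append (hP : IsStarPresentation G t fl lv fe le) (e : Fin (n + N)) :
    G.src (Fin.append fe le e) = Fin.append fl lv ((starGraph n N t w hw).src e) := by
  induction e using Fin.addCases <;> simp [hP.src_fe, hP.src_le]

theorem tgt_append (hP : IsStarPresentation G t fl lv fe le) (e : Fin (n + N)) :
    G.tgt (Fin.append fe le e) = Fin.append fl lv ((starGraph n N t w hw).tgt e) := by
  induction e using Fin.addCases <;> simp [hP.tgt_fe, hP.tgt_le]

theorem w_append (hP : IsStarPresentation G t fl lv fe le) (hwe : ∀ j, G.w (fe j) = w j)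
    (e : Fin (n + N)) : G.w (Fin.append fe le e) = (starGraph n N t w hw).w e := by
  induction e using Fin.addCases <;> simp [hwe, hP.w_le]

theorem div_succ (hP : IsStarPresentation G t fl lv fe le) (j : Fin n) :
    G.div (fl j.succ) = G.w (fe j) + #{ℓ | t ℓ = j.succ} := by
  have := WOGraph.div_map (H := starGraph n N t (G.w ∘ fe) fun _ => G.w_pos _)
    hP.bijective_vert.1 hP.bijective_edge hP.src_append hP.tgt_append
    (hP.w_append fun _ => rfl) (Fin.castAdd N j.succ)
  rwa [starGraph.div_succ, Fin.append_left] at this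

end IsStarPresentation

theorem IsStarPresentation.equivalent {k g a : ℕ} {b : Fin k → ℕ} {μ₁ μ₂ : List ℕ}
    {X : MarkedFD k g a b μ₁ μ₂} {n N : ℕ} {t : Fin N → Fin (n + 1)}
    {fl : Fin (n + 1) → Fin X.G.nV} {lv : Fin N → Fin X.G.nV}
    {fe : Fin n → Fin X.G.nE} {le : Fin N → Fin X.G.nE} {w : Fin n → ℕ} {hw : ∀ j, 0 < w j}
    (hP : IsStarPresentation X.G t fl lv fe le) (hwe : ∀ j, X.G.w (fe j) = w j)
    {mk : MarkDom k g a b μ₁.length μ₂.length → Fin (n + 1 + N) ⊕ Fin (n + N)}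
    (hfd : IsFloorDiagram (starGraph n N t w hw) g a)
    (hmk : IsMarking k g a b μ₁ μ₂ (starGraph n N t w hw) mk)
    (hm : ∀ p, X.m p = Sum.map (Fin.append fl lv) (Fin.append fe le) (mk p)) :
    X.Equivalent ⟨starGraph n N t w hw, mk, hfd, hmk⟩ :=
  MarkedFD.equivalent_of_bijective hP.bijective_vert hP.bijective_edge (hP.src_append (hw := hw))
    (hP.tgt_append (hw := hw)) (hP.w_append (hw := hw) hwe) hm

/-- A marking which reaches every end, and every floor either directly or through an edge
pointing to it, leaves no room for a non-trivial isomorphism fixing the marks. -/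
theorem starGraph.eq_of_isIso {k g a : ℕ} {b : Fin k → ℕ} {μ₁ μ₂ : List ℕ} {n N : ℕ}
    {t t' : Fin N → Fin (n + 1)} {w w' : Fin n → ℕ} {hw : ∀ j, 0 < w j} {hw' : ∀ j, 0 < w' j}
    {mk : MarkDom k g a b μ₁.length μ₂.length → Fin (n + 1 + N) ⊕ Fin (n + N)}
    {hfd : IsFloorDiagram (starGraph n N t w hw) g a}
    {hmk : IsMarking k g a b μ₁ μ₂ (starGraph n N t w hw) mk}
    {hfd' : IsFloorDiagram (starGraph n N t' w' hw') g a}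
    {hmk' : IsMarking k g a b μ₁ μ₂ (starGraph n N t' w' hw') mk}
    {φV : Fin (n + 1 + N) ≃ Fin (n + 1 + N)} {φE : Fin (n + N) ≃ Fin (n + N)}
    (h : MarkedFD.IsIso ⟨_, mk, hfd, hmk⟩ ⟨_, mk, hfd', hmk'⟩ φV φE)
    (h_ends : ∀ ℓ, ∃ p, mk p = .inl (Fin.natAdd (n + 1) ℓ))
    (h_floors : ∀ f, (∃ p, mk p = .inl (Fin.castAdd N f)) ∨
      ∃ p j, mk p = .inr (Fin.castAdd N j) ∧ f = j.succ) :
    t = t' := by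
  obtain ⟨hs, ht, -, hm⟩ := h
  have hV {p v} (hp : mk p = .inl v) : φV v = v := by
    simpa [hp, eq_comm] using hm p
  have hE {p e} (hp : mk p = .inr e) : φE e = e := by
    simpa [hp, eq_comm] using hm p
  have hfloor (f : Fin (n + 1)) : φV (Fin.castAdd N f) = Fin.castAdd N f := by
    rcases h_floors f with ⟨p, hp⟩ | ⟨p, j, hp, rfl⟩
    · exact hV hp
    · simpa [hE hp] using (ht (Fin.castAdd N j)).symm
  funext ℓ
  obtain ⟨p, hp⟩ := h_ends ℓ
  have hℓ : φE (Fin.natAdd n ℓ) = Fin.natAdd n ℓ :=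
    (starGraph.src_eq_natAdd_iff (t := t') (w := w') (hw := hw')).1
      ((hs _).trans (by simpa using hV hp))
  simpa [hℓ, hfloor, eq_comm] using ht (Fin.natAdd n ℓ)


namespace Quartic

open WOGraph starGraph

/-- `MarkDom 6 0 4 (fun _ => 1) 2 0` written out, so that instances such as `Fintype` are found
and `decide` can check statements about concrete markings. The marks of `A₀` are numbered
`0, …, 4`. -/
abbrev MarkDomain : Type := Fin 5 ⊕ (Σ _ : Fin 6, Fin 1)

abbrev Marked : Type := MarkedFD 6 0 4 (fun _ => 1) [1, 1] []

theorem isMarking_starGraph {n c : ℕ} {t : Fin 8 → Fin (n + 1)} {w : Fin n → ℕ}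
    {hw : ∀ j, 0 < w j} (hwc : ∀ j, w j + #{ℓ | t ℓ = j.succ} = c) (hN : 8 = n * c + 4)
    {mk : MarkDomain → Fin (n + 1 + 8) ⊕ Fin (n + 8)} (h_inj : Function.Injective mk)
    (h_rank : ∀ i j : Fin 5, rank n 8 (mk (.inl i)) < rank n 8 (mk (.inl j)) → i < j)
    (h_mu1 : ∀ i : Fin 5, (∃ ℓ, mk (.inl i) = .inl (Fin.natAdd (n + 1) ℓ)) ↔ (i : ℕ) < 2)
    (h_exc : ∀ i p, ∃ ℓ, mk (.inr ⟨i, p⟩) = .inl (Fin.natAdd (n + 1) ℓ))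
    (h_ends : ∀ ℓ, ∃ p, mk p = .inl (Fin.natAdd (n + 1) ℓ))
    (h_edges : ∀ p ℓ, mk p ≠ .inr (Fin.natAdd n ℓ))
    (h_floors : ∀ p f, mk p = .inl (Fin.castAdd 8 f) → f = 0 ∨ c = 4) :
    IsMarking 6 0 4 (fun _ => 1) [1, 1] [] (starGraph n 8 t w hw) mk := by
  have h0 := exists_eq_zero hwc hN
  have hinf {x : Fin (n + 1 + 8) ⊕ Fin (n + 8)} :
      (∃ v, (starGraph n 8 t w hw).InfVert v ∧ x = .inl v) ↔
        ∃ ℓ, x = .inl (Fin.natAdd (n + 1) ℓ) := by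
    simp [infVert_iff_eq_natAdd h0]
  refine ⟨h_inj, fun i j h => h_rank i j (h.rank_lt (rank n 8) fun _ _ => rank_lt_of_veStep),
    fun v hv h2 p hp => ?_, fun v hv e he => ?_, fun i p => hinf.2 (h_exc i p),
    fun i => hinf.trans (h_mu1 i), ?_, fun i hi v e hv he => ?_, ?_⟩
  · obtain ⟨f, rfl⟩ := eq_castAdd_of_not_infVert hv
    rw [div_castAdd_eq hwc hN] at h2
    rcases h_floors p f hp with rfl | rfl <;> simp at h2
  · obtain ⟨ℓ, rfl⟩ := (infVert_iff_eq_natAdd h0).1 hv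
    obtain rfl := adj_natAdd_iff.1 he
    exact Or.inl ⟨h_ends ℓ, fun ⟨p, hp⟩ => h_edges p ℓ hp⟩
  · rintro i v - e e' - - ⟨p, u, hp, hu⟩ ⟨p', u', hp', hu'⟩
    obtain rfl : p = p' := Subsingleton.elim _ _
    obtain ⟨ℓ, hℓ⟩ := h_exc i p
    obtain rfl := Sum.inl_injective (hp.symm.trans hℓ)
    obtain rfl := Sum.inl_injective (hp'.symm.trans hℓ)
    exact (adj_natAdd_iff.1 hu).trans (adj_natAdd_iff.1 hu').symm
  · obtain ⟨ℓ, hℓ⟩ := (h_mu1 i).2 hi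
    obtain rfl := Sum.inl_injective (hv.symm.trans hℓ)
    obtain rfl := adj_natAdd_iff.1 he
    have : ∀ (i : ℕ) (h : i < 2), [1, 1][i] = 1 := by decide
    simpa using (this i hi).symm
  · simp only [Multiset.coe_nil, Multiset.map_eq_zero, val_eq_zero, filter_eq_empty_iff]
    rintro e - ⟨he, i, hi⟩
    obtain ⟨ℓ, rfl⟩ := (infEdge_iff h0).1 he
    exact h_edges _ ℓ hi

/-- The marks `0, 1 ∈ A₀` and the elements of `A₁, …, A₆` go to the ends `0, …, 7`; the mark
`2` goes to the floor `0`, the mark `3` to the edge from floor `0` to floor `1`, and the mark `4`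
to `x₄`. -/
def starMark (n : ℕ) (hn : 0 < n) (x₄ : Fin (n + 1 + 8) ⊕ Fin (n + 8)) :
    MarkDomain → Fin (n + 1 + 8) ⊕ Fin (n + 8) :=
  Sum.elim ![.inl (Fin.natAdd _ 0), .inl (Fin.natAdd _ 1), .inl (Fin.castAdd 8 0),
    .inr (Fin.castAdd 8 ⟨0, hn⟩), x₄] fun p => .inl (Fin.natAdd _ ⟨p.1 + 2, by omega⟩)

def markOne : MarkDomain → Fin (1 + 1 + 8) ⊕ Fin (1 + 8) :=
  starMark 1 one_pos (.inl (Fin.castAdd 8 1))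

def markTwo : MarkDomain → Fin (2 + 1 + 8) ⊕ Fin (2 + 8) :=
  starMark 2 two_pos (.inr (Fin.castAdd 8 1))

def attachOne (S : Finset (Fin 8)) (ℓ : Fin 8) : Fin 2 := if ℓ ∈ S then 1 else 0

def attachTwo (S : Finset (Fin 8) × Finset (Fin 8)) (ℓ : Fin 8) : Fin 3 :=
  if ℓ ∈ S.1 then 1 else if ℓ ∈ S.2 then 2 else 0

theorem card_attachOne (S : Finset (Fin 8)) (j : Fin 1) :
    #{ℓ | attachOne S ℓ = j.succ} = #S := by
  obtain rfl := Subsingleton.elim j 0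
  congr 1
  ext ℓ
  by_cases h : ℓ ∈ S <;> simp [attachOne, h]

theorem card_attachTwo {S : Finset (Fin 8) × Finset (Fin 8)} (hS : Disjoint S.1 S.2)
    (j : Fin 2) : #{ℓ | attachTwo S ℓ = j.succ} = ![#S.1, #S.2] j := by
  fin_cases j
  all_goals
    simp only [Fin.zero_eta, Fin.mk_one, Fin.isValue, Matrix.cons_val_zero, Matrix.cons_val_one]
    congr 1
    ext ℓ
    have hd : ℓ ∈ S.1 → ℓ ∉ S.2 := fun h => disjoint_left.1 hS h
    by_cases h1 : ℓ ∈ S.1 <;> by_cases h2 : ℓ ∈ S.2 <;> simp_all [attachTwo, Fin.ext_iff]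

/-- The representatives are indexed by the set of ends attached to the upper floor, resp. the
sets of ends attached to the two upper floors. -/
abbrev IdxOne : Type := {S : Finset (Fin 8) // #S ≤ 3}

abbrev IdxTwo : Type :=
  {S : Finset (Fin 8) × Finset (Fin 8) // #S.1 ≤ 1 ∧ #S.2 ≤ 1 ∧ Disjoint S.1 S.2}

theorem weightOne_pos (S : IdxOne) : 0 < 4 - #S.1 := by
  have := S.2
  omega

theorem weight_add_card_attachOne (S : IdxOne) (j : Fin 1) :
    4 - #S.1 + #{ℓ | attachOne S.1 ℓ = j.succ} = 4 := by
  rw [card_attachOne]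
  have := S.2
  omega

theorem weightTwo_pos (S : IdxTwo) (j : Fin 2) : 0 < ![2 - #S.1.1, 2 - #S.1.2] j := by
  have := S.2.1
  have := S.2.2.1
  fin_cases j <;> simp <;> omega

theorem weight_add_card_attachTwo (S : IdxTwo) (j : Fin 2) :
    ![2 - #S.1.1, 2 - #S.1.2] j + #{ℓ | attachTwo S.1 ℓ = j.succ} = 2 := by
  rw [card_attachTwo S.2.2.2]
  have := S.2.1
  have := S.2.2.1
  fin_cases j <;> simp <;> omega

def repOne (S : IdxOne) : Marked where
  G := starGraph 1 8 (attachOne S.1) (fun _ => 4 - #S.1) fun _ => weightOne_pos S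
  m := markOne
  fd := isFloorDiagram (Or.inr rfl) (weight_add_card_attachOne S) rfl rfl
  marking := isMarking_starGraph (weight_add_card_attachOne S) rfl
    (by decide) (by decide) (by decide) (by decide) (by decide) (by decide) (by decide)

def repTwo (S : IdxTwo) : Marked where
  G := starGraph 2 8 (attachTwo S.1) ![2 - #S.1.1, 2 - #S.1.2] (weightTwo_pos S)
  m := markTwo
  fd := isFloorDiagram (Or.inl rfl) (weight_add_card_attachTwo S) rfl rfl
  marking := isMarking_starGraph (weight_add_card_attachTwo S) rfl
    (by decide) (by decide) (by decide) (by decide) (by decide) (by decide) (by decide)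

theorem multq_repOne (S : IdxOne) : (repOne S).multq = qInt (4 - #S.1) ^ 2 := by
  rw [MarkedFD.multq_eq_prod_edgeO _ (by simp)]
  exact (prod_not_infEdge (hw := fun _ => weightOne_pos S)
    (exists_eq_zero (weight_add_card_attachOne S) rfl) _).trans (by simp [repOne])

theorem multq_repTwo (S : IdxTwo) :
    (repTwo S).multq = qInt (2 - #S.1.1) ^ 2 * qInt (2 - #S.1.2) ^ 2 := by
  rw [MarkedFD.multq_eq_prod_edgeO _ (by simp)]
  exact (prod_not_infEdge (hw := weightTwo_pos S)
    (exists_eq_zero (weight_add_card_attachTwo S) rfl) _).trans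
    (by simp [repTwo, Fin.prod_univ_two])

theorem sum_multq_repOne :
    ∑ S : IdxOne, (repOne S).multq = qInt 4 ^ 2 + 8 * qInt 3 ^ 2 + 28 * qInt 2 ^ 2 + 56 := by
  simp only [multq_repOne]
  rw [← sum_subtype (univ.filter fun S : Finset (Fin 8) => #S ≤ 3) (by simp)
    (fun S => qInt (4 - #S) ^ 2), sum_filter, ← powerset_univ,
    sum_powerset_apply_card (fun m => if m ≤ 3 then qInt (4 - m) ^ 2 else 0)]
  simp [sum_range_succ, Nat.choose, qInt_one]

/-- Summing first over the sets `S₂` disjoint from `S₁`, i.e. over the subsets of `S₁ᶜ`, both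
sums become sums over cardinalities. -/
theorem sum_multq_repTwo :
    ∑ S : IdxTwo, (repTwo S).multq = qInt 2 ^ 4 + 16 * qInt 2 ^ 2 + 56 := by
  set g : ℕ → LaurentPolynomial ℚ := fun m => if m ≤ 1 then qInt (2 - m) ^ 2 else 0
  have hsplit (S₁ S₂ : Finset (Fin 8)) :
      (if #S₁ ≤ 1 ∧ #S₂ ≤ 1 ∧ Disjoint S₁ S₂ then qInt (2 - #S₁) ^ 2 * qInt (2 - #S₂) ^ 2
        else 0) = g #S₁ * if Disjoint S₁ S₂ then g #S₂ else 0 := by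
    simp only [g]
    split_ifs <;> simp_all
  have hdisj (S₁ : Finset (Fin 8)) : ∑ S₂, (if Disjoint S₁ S₂ then g #S₂ else 0) =
      ∑ m ∈ range (8 - #S₁ + 1), (8 - #S₁).choose m • g m := by
    rw [← sum_filter, show univ.filter (Disjoint S₁) = S₁ᶜ.powerset by
        ext; simp [subset_compl_iff_disjoint_left],
      sum_powerset_apply_card, card_compl, Fintype.card_fin]
  simp only [multq_repTwo]
  rw [← sum_subtype (univ.filter fun S : Finset (Fin 8) × Finset (Fin 8) =>
      #S.1 ≤ 1 ∧ #S.2 ≤ 1 ∧ Disjoint S.1 S.2) (by simp)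
      (fun S => qInt (2 - #S.1) ^ 2 * qInt (2 - #S.2) ^ 2), sum_filter, Fintype.sum_prod_type]
  simp only [hsplit, ← mul_sum, hdisj]
  rw [← powerset_univ, sum_powerset_apply_card
    (fun k => g k * ∑ m ∈ range (8 - k + 1), (8 - k).choose m • g m)]
  simp [g, sum_range_succ, Nat.choose, qInt_one]
  ring

section Classification

/-- The eight marks which are sent to unbounded ends: `0, 1 ∈ A₀` and the elements of
`A₁, …, A₆`. -/
def label (ℓ : Fin 8) : MarkDomain :=
  if h : (ℓ : ℕ) < 2 then .inl ⟨ℓ, by omega⟩ else .inr ⟨⟨ℓ - 2, by omega⟩, 0⟩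

theorem label_injective : Function.Injective label := by decide

variable (X : Marked)

theorem exists_infVert_m_label (ℓ : Fin 8) : ∃ v, X.G.InfVert v ∧ X.m (label ℓ) = .inl v := by
  unfold label
  split
  · exact (X.marking.mu1_vert _).2 (by simp; omega)
  · exact X.marking.exc_vert _ _

noncomputable def endV (ℓ : Fin 8) : Fin X.G.nV := (exists_infVert_m_label X ℓ).choose

theorem infVert_endV (ℓ : Fin 8) : X.G.InfVert (endV X ℓ) :=
  (exists_infVert_m_label X ℓ).choose_spec.1

theorem m_label (ℓ : Fin 8) : X.m (label ℓ) = .inl (endV X ℓ) :=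
  (exists_infVert_m_label X ℓ).choose_spec.2

theorem endV_injective : Function.Injective (endV X) := fun ℓ ℓ' h =>
  label_injective (X.marking.inj (by rw [m_label, m_label, h]))

theorem card_infVert : #{v | X.G.InfVert v} = 8 := by
  refine le_antisymm X.fd.card_infVert_le ?_
  calc 8 = #(univ.image (endV X)) := by rw [card_image_of_injective _ (endV_injective X)]; rfl
    _ ≤ _ := card_le_card fun v hv => by
      obtain ⟨ℓ, -, rfl⟩ := mem_image.1 hv
      simpa using infVert_endV X ℓ

theorem infVert_iff_exists_endV {v : Fin X.G.nV} : X.G.InfVert v ↔ ∃ ℓ, endV X ℓ = v := by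
  refine ⟨fun hv => ?_, fun ⟨ℓ, h⟩ => h ▸ infVert_endV X ℓ⟩
  have himage : univ.image (endV X) = univ.filter (X.G.InfVert ·) :=
    eq_of_subset_of_card_le (fun v hv => by
      obtain ⟨ℓ, -, rfl⟩ := mem_image.1 hv
      simpa using infVert_endV X ℓ)
      (by rw [card_infVert, card_image_of_injective _ (endV_injective X)]; rfl)
  simpa using (Finset.ext_iff.1 himage v).2 (by simpa using hv)

noncomputable def endE (ℓ : Fin 8) : Fin X.G.nE := (infVert_endV X ℓ).exists_src_eq_iff.choose

theorem src_eq_endV_iff {e : Fin X.G.nE} {ℓ : Fin 8} : X.G.src e = endV X ℓ ↔ e = endE X ℓ :=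
  (infVert_endV X ℓ).exists_src_eq_iff.choose_spec e

theorem src_endE (ℓ : Fin 8) : X.G.src (endE X ℓ) = endV X ℓ :=
  (src_eq_endV_iff X).2 rfl

theorem endE_injective : Function.Injective (endE X) := fun ℓ ℓ' h =>
  endV_injective X (by rw [← src_endE, h, src_endE])

theorem w_endE (ℓ : Fin 8) : X.G.w (endE X ℓ) = 1 := by
  have := X.fd.div_eq_neg_one (card_infVert X) (infVert_endV X ℓ)
  rw [(infVert_endV X ℓ).div_eq (src_endE X ℓ)] at this
  omega

theorem infEdge_iff_exists_endE {e : Fin X.G.nE} : X.G.InfEdge e ↔ ∃ ℓ, endE X ℓ = e := by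
  constructor
  · rintro ⟨v, hadj, hv⟩
    obtain ⟨ℓ, rfl⟩ := (infVert_iff_exists_endV X).1 hv
    exact ⟨ℓ, ((src_eq_endV_iff X).1 (hadj.resolve_right (hv.tgt_ne e))).symm⟩
  · rintro ⟨ℓ, rfl⟩
    exact ⟨endV X ℓ, Or.inl (src_endE X ℓ), infVert_endV X ℓ⟩

theorem infVert_src_iff {e : Fin X.G.nE} : X.G.InfVert (X.G.src e) ↔ X.G.InfEdge e := by
  rw [infVert_iff_exists_endV, infEdge_iff_exists_endE]
  exact exists_congr fun ℓ => by rw [eq_comm, src_eq_endV_iff, eq_comm]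

noncomputable def floors : Finset (Fin X.G.nV) := univ.filter (¬X.G.InfVert ·)

noncomputable def floorsDegTwo : Finset (Fin X.G.nV) :=
  univ.filter fun v => ¬X.G.InfVert v ∧ X.G.div v = 4

noncomputable def floorEdges : Finset (Fin X.G.nE) := univ.filter (¬X.G.InfEdge ·)

noncomputable def attachedTo (v : Fin X.G.nV) : Finset (Fin 8) :=
  univ.filter fun ℓ => X.G.tgt (endE X ℓ) = v

theorem mem_floors {v : Fin X.G.nV} : v ∈ floors X ↔ ¬X.G.InfVert v := by
  simp [floors]

theorem mem_floorsDegTwo {v : Fin X.G.nV} :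
    v ∈ floorsDegTwo X ↔ ¬X.G.InfVert v ∧ X.G.div v = 4 := by
  simp [floorsDegTwo]

theorem mem_floorEdges {e : Fin X.G.nE} : e ∈ floorEdges X ↔ ¬X.G.InfEdge e := by
  simp [floorEdges]

theorem tgt_mem_floors (e : Fin X.G.nE) : X.G.tgt e ∈ floors X :=
  (mem_floors X).2 fun h => h.tgt_ne e rfl

theorem src_mem_floorsDegTwo {e : Fin X.G.nE} (he : e ∈ floorEdges X) :
    X.G.src e ∈ floorsDegTwo X := by
  have h := (infVert_src_iff X).not.2 ((mem_floorEdges X).1 he)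
  exact (mem_floorsDegTwo X).2 ⟨h, X.fd.div_src_eq_four h⟩

theorem disjoint_attachedTo {v v' : Fin X.G.nV} (h : v ≠ v') :
    Disjoint (attachedTo X v) (attachedTo X v') :=
  disjoint_filter.2 fun _ _ h₁ h₂ => h (h₁.symm.trans h₂)

theorem card_vert : X.G.nV = #(floors X) + 8 := by
  have := card_filter_add_card_filter_not (s := univ) (X.G.InfVert ·)
  rw [card_infVert, card_univ, Fintype.card_fin] at this
  rw [floors]
  omega

theorem card_edge : X.G.nE = #(floorEdges X) + 8 := by
  have himage : univ.filter (X.G.InfEdge ·) = univ.image (endE X) := by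
    ext e
    simp [infEdge_iff_exists_endE]
  have := card_filter_add_card_filter_not (s := univ) (X.G.InfEdge ·)
  rw [himage, card_image_of_injective _ (endE_injective X), card_univ, card_univ,
    Fintype.card_fin, Fintype.card_fin] at this
  rw [floorEdges]
  omega

theorem card_floorEdges_add_one : #(floorEdges X) + 1 = #(floors X) := by
  have := X.fd.betti
  rw [card_vert, card_edge] at this
  omega

/-- The floors have total divergence `8`, each `2` or `4`. -/
theorem card_floors_add_card_floorsDegTwo : #(floors X) + #(floorsDegTwo X) = 4 := by
  have hsplit := sum_filter_add_sum_filter_not (univ.filter (¬X.G.InfVert ·)) (X.G.div · = 4)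
    X.G.div
  have hcard := card_filter_add_card_filter_not (s := univ.filter (¬X.G.InfVert ·))
    (X.G.div · = 4)
  have h2 : ∀ v ∈ (univ.filter (¬X.G.InfVert ·)).filter (¬X.G.div · = 4), X.G.div v = 2 :=
    fun v hv => by
      simp only [mem_filter] at hv
      exact (X.fd.div_floor v hv.1.2).resolve_right hv.2
  rw [X.fd.sum_div_floor, sum_congr rfl h2, sum_congr rfl fun v hv => (mem_filter.1 hv).2,
    sum_const, sum_const, filter_filter] at hsplit
  rw [filter_filter] at hcard
  simp only [floors, floorsDegTwo]
  push_cast [nsmul_eq_mul] at hsplit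
  omega

theorem floorsDegTwo_nonempty : (floorsDegTwo X).Nonempty := by
  by_contra h
  rw [not_nonempty_iff_eq_empty] at h
  have := card_floors_add_card_floorsDegTwo X
  have := card_floorEdges_add_one X
  obtain ⟨e, he⟩ := card_pos.1 (show 0 < #(floorEdges X) by simp_all)
  exact notMem_empty _ (h ▸ src_mem_floorsDegTwo X he)

theorem m_inl_injective : Function.Injective fun i : Fin 5 => X.m (.inl i) :=
  X.marking.inj.comp Sum.inl_injective

theorem m_mem_disjSum {i : Fin 5} (hi : 2 ≤ (i : ℕ)) :
    X.m (.inl i) ∈ (floorsDegTwo X).disjSum (floorEdges X) := by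
  rcases h : X.m (.inl i) with v | e
  · have hv : ¬X.G.InfVert v := fun hv => by
      have := (X.marking.mu1_vert i).1 ⟨v, hv, h⟩
      simp at this
      omega
    have h4 := (X.fd.div_floor v hv).resolve_left fun h2 => X.marking.no_floor_one v hv h2 _ h
    simpa [floorsDegTwo] using ⟨hv, h4⟩
  · simpa [floorEdges] using X.marking.not_infEdge h

/-- Counting shows that the marks `2, 3, 4 ∈ A₀` exhaust the floors of degree `2` and the
edges between floors. -/
theorem exists_m_eq {x : Fin X.G.nV ⊕ Fin X.G.nE}
    (hx : x ∈ (floorsDegTwo X).disjSum (floorEdges X)) :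
    ∃ i : Fin 5, 2 ≤ (i : ℕ) ∧ X.m (.inl i) = x := by
  have hsub : (univ.filter fun i : Fin 5 => 2 ≤ (i : ℕ)).image (X.m ∘ .inl) ⊆
      (floorsDegTwo X).disjSum (floorEdges X) := fun x hx => by
    obtain ⟨i, hi, rfl⟩ := mem_image.1 hx
    exact m_mem_disjSum X (mem_filter.1 hi).2
  have hcard : #((floorsDegTwo X).disjSum (floorEdges X)) ≤
      #((univ.filter fun i : Fin 5 => 2 ≤ (i : ℕ)).image (X.m ∘ .inl)) := by
    rw [card_disjSum, card_image_of_injective _ (X.marking.inj.comp Sum.inl_injective)]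
    have := card_floors_add_card_floorsDegTwo X
    have := card_floorEdges_add_one X
    simp only [show #(univ.filter fun i : Fin 5 => 2 ≤ (i : ℕ)) = 3 by rfl]
    omega
  obtain ⟨i, hi, rfl⟩ := mem_image.1 ((eq_of_subset_of_card_le hsub hcard).symm ▸ hx)
  exact ⟨i, (mem_filter.1 hi).2, rfl⟩

theorem isStarPresentation {n : ℕ} {t : Fin 8 → Fin (n + 1)} {fl : Fin (n + 1) → Fin X.G.nV}
    {fe : Fin n → Fin X.G.nE} (hfl : Function.Injective fl)
    (hfl_floor : ∀ f, ¬X.G.InfVert (fl f)) (hcard : #(floors X) = n + 1)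
    (hfe : Function.Injective fe) (hfe_floor : ∀ j, ¬X.G.InfEdge (fe j))
    (hsrc : ∀ j, X.G.src (fe j) = fl 0) (htgt : ∀ j, X.G.tgt (fe j) = fl j.succ)
    (ht : ∀ ℓ, X.G.tgt (endE X ℓ) = fl (t ℓ)) :
    IsStarPresentation X.G t fl (endV X) fe (endE X) where
  bijective_vert := (Fintype.bijective_iff_injective_and_card _).2
    ⟨Fin.append_injective_iff.2 ⟨hfl, endV_injective X,
      fun f ℓ h => hfl_floor f (h ▸ infVert_endV X ℓ)⟩, by simp [card_vert, hcard]⟩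
  bijective_edge := (Fintype.bijective_iff_injective_and_card _).2
    ⟨Fin.append_injective_iff.2 ⟨hfe, endE_injective X,
      fun j ℓ h => hfe_floor j ((infEdge_iff_exists_endE X).2 ⟨ℓ, h.symm⟩)⟩, by
        have := card_floorEdges_add_one X
        simp [card_edge]
        omega⟩
  src_fe := hsrc
  tgt_fe := htgt
  src_le := src_endE X
  tgt_le := ht
  w_le := w_endE X

theorem m_eq_starMark {n : ℕ} (hn : 0 < n) {fl : Fin (n + 1) → Fin X.G.nV}
    {fe : Fin n → Fin X.G.nE} {x₄ : Fin (n + 1 + 8) ⊕ Fin (n + 8)}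
    (h2 : X.m (.inl (2 : Fin 5)) = .inl (fl 0)) (h3 : X.m (.inl (3 : Fin 5)) = .inr (fe ⟨0, hn⟩))
    (h4 : X.m (.inl (4 : Fin 5)) = Sum.map (Fin.append fl (endV X)) (Fin.append fe (endE X)) x₄)
    (p : MarkDomain) :
    X.m p = Sum.map (Fin.append fl (endV X)) (Fin.append fe (endE X)) (starMark n hn x₄ p) := by
  rcases p with i | ⟨i, p⟩
  · fin_cases i
    · simpa [label, starMark] using m_label X 0
    · simpa [label, starMark] using m_label X 1
    · simpa [starMark] using h2
    · exact h3.trans (congrArg Sum.inr (Fin.append_left fe (endE X) ⟨0, hn⟩).symm)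
    · simpa [starMark] using h4
  · obtain rfl := Subsingleton.elim p 0
    have := m_label X ⟨i + 2, by omega⟩
    simp only [label, show ¬(i : ℕ) + 2 < 2 by omega, dite_false, Nat.add_sub_cancel] at this
    simp only [starMark, Sum.elim_inr, Sum.map_inl, Fin.append_right]
    exact this


theorem marks_of_card_floorsDegTwo_eq_two (hbig : #(floorsDegTwo X) = 2) :
    ∃ e, floorEdges X = {e} ∧ floors X = {X.G.src e, X.G.tgt e} ∧ X.G.div (X.G.tgt e) = 4 ∧
      X.m (.inl (2 : Fin 5)) = .inl (X.G.src e) ∧ X.m (.inl (3 : Fin 5)) = .inr e ∧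
      X.m (.inl (4 : Fin 5)) = .inl (X.G.tgt e) := by
  have hfloors : #(floors X) = 2 := by have := card_floors_add_card_floorsDegTwo X; omega
  have hbig_eq : floorsDegTwo X = floors X := eq_of_subset_of_card_le
    (fun v hv => (mem_floors X).2 ((mem_floorsDegTwo X).1 hv).1) (by omega)
  obtain ⟨e, he⟩ := card_eq_one.1
    (show #(floorEdges X) = 1 by have := card_floorEdges_add_one X; omega)
  have hP := src_mem_floorsDegTwo X (he ▸ mem_singleton_self e)
  have hQ := hbig_eq ▸ tgt_mem_floors X e
  obtain ⟨iP, hiP, hmP⟩ := exists_m_eq X (inl_mem_disjSum.2 hP)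
  obtain ⟨ie, -, hme⟩ := exists_m_eq X (inr_mem_disjSum.2 (he ▸ mem_singleton_self e))
  obtain ⟨iQ, -, hmQ⟩ := exists_m_eq X (inl_mem_disjSum.2 hQ)
  have hPe := X.marking.incr iP ie (by rw [hmP, hme]; exact .single rfl)
  have heQ := X.marking.incr ie iQ (by rw [hme, hmQ]; exact .single rfl)
  obtain ⟨rfl, rfl, rfl⟩ : iP = 2 ∧ ie = 3 ∧ iQ = 4 := by
    simp only [Fin.lt_def] at hPe heQ
    refine ⟨Fin.ext ?_, Fin.ext ?_, Fin.ext ?_⟩ <;> simp <;> omega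
  refine ⟨e, he, (eq_of_subset_of_card_le ?_ ?_).symm, ((mem_floorsDegTwo X).1 hQ).2, hmP, hme,
    hmQ⟩
  · simp [insert_subset_iff, tgt_mem_floors, hbig_eq ▸ hP]
  · rw [hfloors, card_pair (X.fd.acyclic.src_ne_tgt e)]

theorem isStarPresentation_one {e : Fin X.G.nE} (he : floorEdges X = {e})
    (hfloors : floors X = {X.G.src e, X.G.tgt e}) :
    IsStarPresentation X.G (attachOne (attachedTo X (X.G.tgt e))) ![X.G.src e, X.G.tgt e]
      (endV X) ![e] (endE X) := by
  have hPQ := X.fd.acyclic.src_ne_tgt e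
  refine isStarPresentation X (Matrix.injective_vecCons_two hPQ) (fun f => ?_)
    (by rw [hfloors, card_pair hPQ]) (Function.injective_of_subsingleton _)
    (fun _ => by simpa using (mem_floorEdges X).1 (he ▸ mem_singleton_self e)) (fun _ => by simp)
    (fun _ => by simp) fun ℓ => ?_
  · exact (mem_floors X).1 (hfloors ▸ by fin_cases f <;> simp)
  · have := hfloors ▸ tgt_mem_floors X (endE X ℓ)
    by_cases hℓ : X.G.tgt (endE X ℓ) = X.G.tgt e <;> simp_all [attachOne, attachedTo]

theorem exists_equivalent_repOne (hbig : #(floorsDegTwo X) = 2) :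
    ∃ S, X.Equivalent (repOne S) := by
  obtain ⟨e, he, hfloors, hdiv, hm2, hm3, hm4⟩ := marks_of_card_floorsDegTwo_eq_two X hbig
  have hpres := isStarPresentation_one X he hfloors
  set S := attachedTo X (X.G.tgt e)
  have hw : X.G.w e + #S = 4 := by
    have := hpres.div_succ 0
    rw [card_attachOne] at this
    simp only [Fin.succ_zero_eq_one, Matrix.cons_val_one, Matrix.cons_val_fin_one, hdiv] at this
    omega
  have hS : #S ≤ 3 := by have := X.G.w_pos e; omega
  refine ⟨⟨S, hS⟩, hpres.equivalent (fun _ => ?_) (repOne ⟨S, hS⟩).fd (repOne ⟨S, hS⟩).marking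
    (m_eq_starMark X one_pos hm2 hm3
      (hm4.trans (congrArg Sum.inl (Fin.append_left ![X.G.src e, X.G.tgt e] (endV X) 1).symm)))⟩
  rw [Matrix.cons_val_fin_one]
  exact Nat.eq_sub_of_add_eq hw

variable {X} {P : Fin X.G.nV}

theorem src_eq_of_floorsDegTwo_eq_singleton (hP : floorsDegTwo X = {P}) {e : Fin X.G.nE}
    (he : e ∈ floorEdges X) : X.G.src e = P :=
  mem_singleton.1 (hP ▸ src_mem_floorsDegTwo X he)

theorem div_eq_two_of_ne (hP : floorsDegTwo X = {P}) {v : Fin X.G.nV} (hv : ¬X.G.InfVert v)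
    (hvP : v ≠ P) : X.G.div v = 2 :=
  (X.fd.div_floor v hv).resolve_right fun h4 =>
    hvP (mem_singleton.1 (hP ▸ (mem_floorsDegTwo X).2 ⟨hv, h4⟩))

theorem div_tgt_eq_two (hP : floorsDegTwo X = {P}) {e : Fin X.G.nE} (he : e ∈ floorEdges X) :
    X.G.div (X.G.tgt e) = 2 :=
  div_eq_two_of_ne hP ((mem_floors X).1 (tgt_mem_floors X e)) fun h =>
    X.fd.acyclic.src_ne_tgt e ((src_eq_of_floorsDegTwo_eq_singleton hP he).trans h.symm)

/-- The floor of degree `2` is the source of every edge between floors, so it carries the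
smallest of the marks `2, 3, 4`, and the other two mark edges between floors. -/
theorem marks_of_floorsDegTwo_eq_singleton (hP : floorsDegTwo X = {P}) :
    X.m (.inl (2 : Fin 5)) = .inl P ∧ ∃ e₁ e₂, floorEdges X = {e₁, e₂} ∧ e₁ ≠ e₂ ∧
      X.m (.inl (3 : Fin 5)) = .inr e₁ ∧ X.m (.inl (4 : Fin 5)) = .inr e₂ := by
  have hm2 : X.m (.inl (2 : Fin 5)) = .inl P := by
    rcases mem_disjSum.1 (m_mem_disjSum X (i := (2 : Fin 5)) le_rfl) with ⟨v, hv, h⟩ | ⟨e, he, h⟩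
    · rw [hP, mem_singleton] at hv
      rw [← h, hv]
    · obtain ⟨i, hi, hmi⟩ := exists_m_eq X (inl_mem_disjSum.2 (hP ▸ mem_singleton_self P))
      have := X.marking.incr i (2 : Fin 5)
        (by rw [hmi, ← h]; exact .single (src_eq_of_floorsDegTwo_eq_singleton hP he))
      simp only [Fin.lt_def] at this
      omega
  have hedge (i : Fin 5) (hi : 3 ≤ (i : ℕ)) : ∃ e ∈ floorEdges X, X.m (.inl i) = .inr e := by
    rcases mem_disjSum.1 (m_mem_disjSum X (i := i) (by omega)) with ⟨v, hv, h⟩ | ⟨e, he, h⟩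
    · rw [hP, mem_singleton] at hv
      have := m_inl_injective X (show X.m (.inl i) = X.m (.inl (2 : Fin 5)) by rw [← h, hm2, hv])
      simp [Fin.ext_iff] at this
      omega
    · exact ⟨e, he, h.symm⟩
  obtain ⟨e₁, he₁, hm3⟩ := hedge 3 (by simp)
  obtain ⟨e₂, he₂, hm4⟩ := hedge 4 (by simp)
  have h12 : e₁ ≠ e₂ := fun h => by
    have := m_inl_injective X (hm3.trans (h ▸ hm4.symm))
    simp [Fin.ext_iff] at this
  refine ⟨hm2, e₁, e₂, (eq_of_subset_of_card_le (by simp [insert_subset_iff, he₁, he₂]) ?_).symm,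
    h12, hm3, hm4⟩
  have := card_floors_add_card_floorsDegTwo X
  have := card_floorEdges_add_one X
  rw [card_pair h12, hP, card_singleton] at *
  omega

/-- Every floor of degree `1` receives one of the two edges between floors. -/
theorem floors_eq_of_floorsDegTwo_eq_singleton (hP : floorsDegTwo X = {P}) {e₁ e₂ : Fin X.G.nE}
    (hE : floorEdges X = {e₁, e₂}) : floors X = {P, X.G.tgt e₁, X.G.tgt e₂} := by
  have hP' := (mem_floorsDegTwo X).1 (hP ▸ mem_singleton_self P)
  refine Finset.ext fun v => ⟨fun hv => ?_, fun hv => ?_⟩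
  · by_cases hvP : v = P
    · simp [hvP]
    have hv' := (mem_floors X).1 hv
    obtain ⟨e, he, hsrc⟩ :=
      X.fd.exists_floorEdge_tgt hv' (div_eq_two_of_ne hP hv' hvP) hP'.1 (Ne.symm hvP)
    have : e ∈ ({e₁, e₂} : Finset _) :=
      hE ▸ (mem_floorEdges X).2 ((infVert_src_iff X).not.1 hsrc)
    rcases mem_insert.1 this with rfl | h
    · simp [he]
    · simp [← he, mem_singleton.1 h]
  · simp only [mem_insert, mem_singleton] at hv
    rcases hv with rfl | rfl | rfl
    exacts [(mem_floors X).2 hP'.1, tgt_mem_floors X e₁, tgt_mem_floors X e₂]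

theorem isStarPresentation_two {e₁ e₂ : Fin X.G.nE} (hE : floorEdges X = {e₁, e₂})
    (h12 : e₁ ≠ e₂) (hsrc₁ : X.G.src e₁ = P) (hsrc₂ : X.G.src e₂ = P)
    (hfloors : floors X = {P, X.G.tgt e₁, X.G.tgt e₂}) (hcard : #(floors X) = 3) :
    IsStarPresentation X.G (attachTwo (attachedTo X (X.G.tgt e₁), attachedTo X (X.G.tgt e₂)))
      ![P, X.G.tgt e₁, X.G.tgt e₂] (endV X) ![e₁, e₂] (endE X) := by
  obtain ⟨hPQ₁, hPQ₂, hQ₁₂⟩ := pairwise_ne_of_card_eq_three (hfloors ▸ hcard)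
  refine isStarPresentation X (Matrix.injective_vecCons_three hPQ₁ hPQ₂ hQ₁₂) (fun f => ?_)
    hcard (Matrix.injective_vecCons_two h12) (fun j => ?_) (fun j => ?_)
    (fun j => by fin_cases j <;> rfl) fun ℓ => ?_
  · exact (mem_floors X).1 (hfloors ▸ by fin_cases f <;> simp)
  · fin_cases j <;> exact (mem_floorEdges X).1 (hE ▸ by simp)
  · fin_cases j
    exacts [hsrc₁, hsrc₂]
  · have := hfloors ▸ tgt_mem_floors X (endE X ℓ)
    simp only [mem_insert, mem_singleton] at this
    simp only [attachTwo, attachedTo, mem_filter, mem_univ, true_and]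
    rcases this with h | h | h <;> rw [h] <;> simp [hPQ₁, hPQ₂, hQ₁₂.symm]

variable (X)

theorem exists_equivalent_repTwo (hbig : #(floorsDegTwo X) = 1) :
    ∃ S, X.Equivalent (repTwo S) := by
  obtain ⟨P, hP⟩ := card_eq_one.1 hbig
  obtain ⟨hm2, e₁, e₂, hE, h12, hm3, hm4⟩ := marks_of_floorsDegTwo_eq_singleton hP
  have he₁ : e₁ ∈ floorEdges X := hE ▸ by simp
  have he₂ : e₂ ∈ floorEdges X := hE ▸ by simp
  have hfloors := floors_eq_of_floorsDegTwo_eq_singleton hP hE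
  have hcard : #(floors X) = 3 := by have := card_floors_add_card_floorsDegTwo X; omega
  obtain ⟨-, -, hQ₁₂⟩ := pairwise_ne_of_card_eq_three (hfloors ▸ hcard)
  have hpres := isStarPresentation_two hE h12 (src_eq_of_floorsDegTwo_eq_singleton hP he₁)
    (src_eq_of_floorsDegTwo_eq_singleton hP he₂) hfloors hcard
  set S := (attachedTo X (X.G.tgt e₁), attachedTo X (X.G.tgt e₂))
  have hS : Disjoint S.1 S.2 := disjoint_attachedTo X hQ₁₂
  have hw (j : Fin 2) : X.G.w (![e₁, e₂] j) + ![#S.1, #S.2] j = 2 := by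
    have hdiv := hpres.div_succ j
    rw [card_attachTwo hS] at hdiv
    fin_cases j
    · simp [div_tgt_eq_two hP he₁] at hdiv ⊢
      omega
    · simp [div_tgt_eq_two hP he₂] at hdiv ⊢
      omega
  have hS₁ : #S.1 ≤ 1 := by
    have := X.G.w_pos e₁
    have := hw 0
    simp only [Matrix.cons_val_zero] at this
    omega
  have hS₂ : #S.2 ≤ 1 := by
    have := X.G.w_pos e₂
    have := hw 1
    simp only [Matrix.cons_val_one, Matrix.cons_val_zero] at this
    omega
  refine ⟨⟨S, hS₁, hS₂, hS⟩, hpres.equivalent (fun j => ?_) (repTwo ⟨S, hS₁, hS₂, hS⟩).fd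
    (repTwo ⟨S, hS₁, hS₂, hS⟩).marking (m_eq_starMark X two_pos hm2 hm3
      (hm4.trans (congrArg Sum.inr (Fin.append_left ![e₁, e₂] (endE X) 1).symm)))⟩
  have := Nat.eq_sub_of_add_eq (hw j)
  fin_cases j <;> simpa using this

end Classification

def rep : IdxOne ⊕ IdxTwo → Marked := Sum.elim repOne repTwo

theorem exists_equivalent_rep (X : Marked) : ∃ i, X.Equivalent (rep i) := by
  have := card_floors_add_card_floorsDegTwo X
  have := card_le_card fun v hv => (mem_floors X).2 ((mem_floorsDegTwo X).1 hv).1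
  have := (floorsDegTwo_nonempty X).card_pos
  obtain h | h : #(floorsDegTwo X) = 2 ∨ #(floorsDegTwo X) = 1 := by omega
  · obtain ⟨S, hS⟩ := exists_equivalent_repOne X h
    exact ⟨.inl S, hS⟩
  · obtain ⟨S, hS⟩ := exists_equivalent_repTwo X h
    exact ⟨.inr S, hS⟩

theorem attachOne_injective : Function.Injective attachOne := fun S S' h => by
  ext ℓ
  have := congrFun h ℓ
  by_cases h₁ : ℓ ∈ S <;> by_cases h₂ : ℓ ∈ S' <;> simp_all [attachOne]

theorem attachTwo_injective {S S' : IdxTwo} (h : attachTwo S.1 = attachTwo S'.1) : S = S' := by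
  have hmem (T : IdxTwo) (ℓ : Fin 8) :
      (ℓ ∈ T.1.1 ↔ attachTwo T.1 ℓ = 1) ∧ (ℓ ∈ T.1.2 ↔ attachTwo T.1 ℓ = 2) := by
    have : ℓ ∈ T.1.1 → ℓ ∉ T.1.2 := fun h => disjoint_left.1 T.2.2.2 h
    by_cases h1 : ℓ ∈ T.1.1 <;> by_cases h2 : ℓ ∈ T.1.2 <;> simp_all [attachTwo]
  refine Subtype.ext (Prod.ext ?_ ?_) <;> ext ℓ
  · rw [(hmem S ℓ).1, (hmem S' ℓ).1, h]
  · rw [(hmem S ℓ).2, (hmem S' ℓ).2, h]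

theorem eq_of_isIso {i j : IdxOne ⊕ IdxTwo} {φV φE} (h : MarkedFD.IsIso (rep i) (rep j) φV φE) :
    i = j := by
  have hcard := Fin.equiv_iff_eq.1 ⟨φV⟩
  rcases i with S | S <;> rcases j with S' | S' <;> simp [rep, repOne, repTwo] at hcard
  · have hends : ∀ ℓ, ∃ p : MarkDomain, markOne p = .inl (Fin.natAdd 2 ℓ) := by decide
    have hfloors : ∀ f : Fin 2, (∃ p : MarkDomain, markOne p = .inl (Fin.castAdd 8 f)) ∨
        ∃ (p : MarkDomain) (j : Fin 1), markOne p = .inr (Fin.castAdd 8 j) ∧ f = j.succ := by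
      decide
    exact congrArg _ (Subtype.ext (attachOne_injective (starGraph.eq_of_isIso h hends hfloors)))
  · have hends : ∀ ℓ, ∃ p : MarkDomain, markTwo p = .inl (Fin.natAdd 3 ℓ) := by decide
    have hfloors : ∀ f : Fin 3, (∃ p : MarkDomain, markTwo p = .inl (Fin.castAdd 8 f)) ∨
        ∃ (p : MarkDomain) (j : Fin 2), markTwo p = .inr (Fin.castAdd 8 j) ∧ f = j.succ := by
      decide
    exact congrArg _ (attachTwo_injective (starGraph.eq_of_isIso h hends hfloors))

end Quartic

/-- In `X₆'` (`k = 6`), for the class `d = 4[L] − Σ_{i=1}^6 [E_i]`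
(so `a = 4`, `bᵢ = 1` for all `i`, and `d·[E] = 2`), the refined count of `d`-marked
floor diagrams of genus `0` and type `((1,1),∅)` is
`N_q^{(1,1),∅} = [2]_q⁴ + [4]_q² + 8[3]_q² + 44[2]_q² + 112`. -/
theorem refined_count_4L_type_11 :
    IsRefinedCount 6 0 4 (fun _ => 1) [1, 1] []
      (qInt 2 ^ 4 + qInt 4 ^ 2 + 8 * qInt 3 ^ 2 + 44 * qInt 2 ^ 2 + 112) := by
  have hb : ∀ i : Fin 6, (fun _ => 1) i ≤ 1 := fun _ => le_rfl
  refine ⟨Quartic.IdxOne ⊕ Quartic.IdxTwo, inferInstance, Quartic.rep, fun X => ?_, ?_⟩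
  · obtain ⟨i, hi⟩ := Quartic.exists_equivalent_rep X
    refine ⟨i, hi, fun j hj => ?_⟩
    obtain ⟨φV, φE, hφ⟩ := (MarkedFD.equivalent_iff_exists_isIso hb).1 hi
    obtain ⟨ψV, ψE, hψ⟩ := (MarkedFD.equivalent_iff_exists_isIso hb).1 hj
    exact Quartic.eq_of_isIso (hψ.symm.trans hφ)
  · rw [Fintype.sum_sum_type]
    simp only [Quartic.rep, Sum.elim_inl, Sum.elim_inr, Quartic.sum_multq_repOne,
      Quartic.sum_multq_repTwo]
    ring
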